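/- Suppose the asset payoffs Y = (Y₀, Y₁, …, Yₙ) are square-integrable and non-redundant with Y₀ = e^r a.s. for a constant r ≥ 0 and time-0 prices y = (1, y₁, …, yₙ), let α ∈ (0,1) and i ∈ (0,1), and let S⊥ be a square-integrable liability independent of (Y₁, …, Yₙ). Then the strategy θ = (e^{−r}·E[S⊥], 0, …, 0) is the quadratic hedging strategy of S⊥, the strategy η = (e^{−r}·VaR_α(S⊥ − E[S⊥]), 0, …, 0) is a minimizer over β ∈ ℝ^{n+1} of E[ℓ_α(S⊥ − θ·Y − β·Y)], and the resulting mean-quantile valuation equals ρ(S⊥) = e^{−r}·E[S⊥] + e^{−r}·i·VaR_α(S⊥ − E[S⊥]). -/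

import Mathlib

open MeasureTheory

/-- Value-at-Risk at level `α`: `VaR_α(X) = inf {x ∈ ℝ : P(X ≤ x) ≥ α}`. -/
noncomputable def VaR {Ω : Type*} [MeasureSpace Ω] (X : Ω → ℝ) (α : ℝ) : ℝ :=
  sInf {x : ℝ | α ≤ (volume {ω | X ω ≤ x}).toReal}

/-- The normalised Koenker–Bassett loss at level `α`:
`ℓ_α(x) = (α/(1−α))·max(x,0) + max(−x,0)`. -/
noncomputable def KBLoss (α x : ℝ) : ℝ :=
  α / (1 - α) * max x 0 + max (-x) 0

/-!
Write `S⊥ = E[S⊥] + X` with `E[X] = 0`. Since `Y₀` is a.s. the constant `e^r`, `θ` and `η` pay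
`E[S⊥]` and `VaR_α(X)`, while every portfolio payoff `Z = β·Y` is a.s. a function of
`(Y₁, …, Yₙ)`, hence independent of `X`.

Quadratic error: independence kills the covariance, so
`E[(S⊥ - Z)²] = Var X + Var Z + (E[S⊥ - Z])² ≥ Var X`.

Quantile error: with `q = VaR_α(X)` and `A = (-∞, q]` or `(-∞, q)`, the function
`s(x) = (1_A(x) - α) / (1 - α)` is a subgradient of `z ↦ ℓ_α(x - z)` at `q`, so
`E ℓ_α(X - Z) ≥ E ℓ_α(X - q) + (E Z - q) · E s(X)` by independence. Choosing `A` according to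
the sign of `E Z - q` makes the last term nonnegative, because `P(X < q) ≤ α ≤ P(X ≤ q)`.
-/

open ProbabilityTheory Filter Set

noncomputable def quantile (ν : Measure ℝ) (α : ℝ) : ℝ :=
  sInf {x | α ≤ cdf ν x}

section Quantile

variable {ν : Measure ℝ} [IsProbabilityMeasure ν] {α : ℝ}

lemma le_measureReal_Iic_quantile (hα : α < 1) : α ≤ ν.real (Iic (quantile ν α)) := by
  rw [← cdf_eq_real]
  have hne : {x | α ≤ cdf ν x}.Nonempty :=
    ((tendsto_cdf_atTop (μ := ν)).eventually (eventually_ge_nhds hα)).exists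
  refine ge_of_tendsto ((cdf ν).right_continuous _ |>.mono Ioi_subset_Ici_self) ?_
  filter_upwards [self_mem_nhdsWithin] with x hx
  obtain ⟨a, ha, hax⟩ := exists_lt_of_csInf_lt hne hx
  exact ha.trans (monotone_cdf ν hax.le)

lemma measureReal_Iio_quantile_le (hα : 0 < α) : ν.real (Iio (quantile ν α)) ≤ α := by
  obtain ⟨x₀, hx₀⟩ :=
    ((tendsto_cdf_atBot (μ := ν)).eventually (eventually_lt_nhds hα)).exists_forall_of_atBot
  have hbdd : BddBelow {x | α ≤ cdf ν x} :=
    ⟨x₀, fun x hx => le_of_not_ge fun hxx => (hx₀ x hxx).not_ge hx⟩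
  have hleft : Function.leftLim (cdf ν) (quantile ν α) ≤ α := by
    refine le_of_tendsto ((monotone_cdf ν).tendsto_leftLim _) ?_
    filter_upwards [self_mem_nhdsWithin] with x hx
    exact le_of_not_ge fun h => (csInf_le hbdd h).not_gt hx
  have hIio := (cdf ν).measure_Iio (tendsto_cdf_atBot ν) (quantile ν α)
  rw [measure_cdf, sub_zero] at hIio
  rw [measureReal_def, hIio]
  exact ENNReal.toReal_ofReal'.trans_le (max_le hleft hα.le)

end Quantile

lemma VaR_eq_quantile_map {Ω : Type*} [MeasureSpace Ω]
    [IsProbabilityMeasure (volume : Measure Ω)] {X : Ω → ℝ} (hX : AEMeasurable X) (α : ℝ) :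
    VaR X α = quantile (volume.map X) α := by
  have := Measure.isProbabilityMeasure_map (μ := (volume : Measure Ω)) hX
  simp only [VaR, quantile, cdf_eq_real, measureReal_def,
    Measure.map_apply_of_aemeasurable hX measurableSet_Iic]
  rfl

section KBLoss

variable {α : ℝ}

lemma kbLoss_sub_add_mul_le (hα₀ : 0 ≤ α) (hα₁ : α < 1) {q : ℝ} {A : Set ℝ}
    (hqA : Iio q ⊆ A) (hAq : A ⊆ Iic q) (x z : ℝ) :
    KBLoss α (x - q) + (z - q) * ((A.indicator 1 x - α) / (1 - α)) ≤ KBLoss α (x - z) := by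
  have hτ : 0 ≤ α / (1 - α) := div_nonneg hα₀ (by linarith)
  unfold KBLoss
  by_cases hx : x ∈ A
  · have hxq : x ≤ q := hAq hx
    rw [indicator_of_mem hx, Pi.one_apply, div_self (by linarith), mul_one]
    rcases le_total x z with h | h
    · simp only [max_eq_right (by linarith : x - q ≤ 0), max_eq_right (by linarith : x - z ≤ 0),
        max_eq_left (by linarith : 0 ≤ -(x - q)), max_eq_left (by linarith : 0 ≤ -(x - z))]
      linarith
    · simp only [max_eq_right (by linarith : x - q ≤ 0), max_eq_left (by linarith : 0 ≤ x - z),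
        max_eq_left (by linarith : 0 ≤ -(x - q)), max_eq_right (by linarith : -(x - z) ≤ 0)]
      nlinarith
  · have hqx : q ≤ x := le_of_not_gt fun h => hx (hqA h)
    rw [indicator_of_notMem hx, zero_sub, neg_div]
    rcases le_total x z with h | h
    · simp only [max_eq_left (by linarith : 0 ≤ x - q), max_eq_right (by linarith : x - z ≤ 0),
        max_eq_right (by linarith : -(x - q) ≤ 0), max_eq_left (by linarith : 0 ≤ -(x - z))]
      nlinarith
    · simp only [max_eq_left (by linarith : 0 ≤ x - q), max_eq_left (by linarith : 0 ≤ x - z),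
        max_eq_right (by linarith : -(x - q) ≤ 0), max_eq_right (by linarith : -(x - z) ≤ 0)]
      linarith

lemma MeasureTheory.Integrable.kbLoss {Ω : Type*} [MeasurableSpace Ω] {μ : Measure Ω}
    {f : Ω → ℝ} (hf : Integrable f μ) (α : ℝ) : Integrable (fun ω => KBLoss α (f ω)) μ :=
  (hf.pos_part.const_mul _).add hf.neg_part

end KBLoss

namespace ProbabilityTheory

variable {Ω : Type*} [MeasureSpace Ω] [IsProbabilityMeasure (volume : Measure Ω)] {X Z : Ω → ℝ}

lemma IndepFun.integral_kbLoss_sub_le {α q : ℝ} (hα₀ : 0 ≤ α) (hα₁ : α < 1)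
    (hXZ : IndepFun X Z) (hX : Integrable X) (hZ : Integrable Z)
    {A : Set ℝ} (hA : MeasurableSet A) (hqA : Iio q ⊆ A) (hAq : A ⊆ Iic q)
    (hsign : 0 ≤ ((∫ ω, Z ω) - q) * ((volume.map X).real A - α)) :
    ∫ ω, KBLoss α (X ω - q) ≤ ∫ ω, KBLoss α (X ω - Z ω) := by
  set s : ℝ → ℝ := fun x => (A.indicator 1 x - α) / (1 - α)
  have hs : Measurable s := ((measurable_one.indicator hA).sub_const α).div_const _
  have := Measure.isProbabilityMeasure_map (μ := (volume : Measure Ω)) hX.aemeasurable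
  have h1A : Integrable (A.indicator 1) (volume.map X) := (integrable_const (1 : ℝ)).indicator hA
  have hs_int : Integrable s (volume.map X) := (h1A.sub (integrable_const α)).div_const _
  have hsX : Integrable (fun ω => s (X ω)) :=
    (integrable_map_measure hs.aestronglyMeasurable hX.aemeasurable).1 hs_int
  have hXq : Integrable (fun ω => X ω - q) := hX.sub (integrable_const q)
  have hZq : Integrable (fun ω => Z ω - q) := hZ.sub (integrable_const q)
  have hindep : IndepFun (fun ω => Z ω - q) (fun ω => s (X ω)) :=
    (hXZ.comp hs (measurable_id.sub_const q)).symm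
  have hprod : Integrable (fun ω => (Z ω - q) * s (X ω)) := hindep.integrable_mul hZq hsX
  have hmean_s : ∫ ω, s (X ω) = ((volume.map X).real A - α) / (1 - α) := by
    rw [← integral_map hX.aemeasurable hs.aestronglyMeasurable, integral_div,
      integral_sub h1A (integrable_const α)]
    simp [integral_indicator_one hA]
  calc ∫ ω, KBLoss α (X ω - q)
      ≤ (∫ ω, KBLoss α (X ω - q)) + ∫ ω, (Z ω - q) * s (X ω) := by
        rw [hindep.integral_fun_mul_eq_mul_integral hZq.aestronglyMeasurable
          hsX.aestronglyMeasurable, integral_sub hZ (integrable_const q), integral_const,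
          probReal_univ, one_smul, hmean_s, ← mul_div_assoc]
        exact le_add_of_nonneg_right (div_nonneg hsign (by linarith))
    _ = ∫ ω, (KBLoss α (X ω - q) + (Z ω - q) * s (X ω)) :=
        (integral_add (hXq.kbLoss α) hprod).symm
    _ ≤ ∫ ω, KBLoss α (X ω - Z ω) :=
        integral_mono ((hXq.kbLoss α).add hprod) ((hX.sub hZ).kbLoss α)
          fun ω => kbLoss_sub_add_mul_le hα₀ hα₁ hqA hAq (X ω) (Z ω)

lemma IndepFun.integral_kbLoss_sub_VaR_le {α : ℝ} (hα₀ : 0 < α) (hα₁ : α < 1)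
    (hXZ : IndepFun X Z) (hX : Integrable X) (hZ : Integrable Z) :
    ∫ ω, KBLoss α (X ω - VaR X α) ≤ ∫ ω, KBLoss α (X ω - Z ω) := by
  have := Measure.isProbabilityMeasure_map (μ := (volume : Measure Ω)) hX.aemeasurable
  rw [VaR_eq_quantile_map hX.aemeasurable]
  rcases le_total (quantile (volume.map X) α) (∫ ω, Z ω) with hq | hq
  · refine hXZ.integral_kbLoss_sub_le hα₀.le hα₁ hX hZ measurableSet_Iic Iio_subset_Iic_self
      subset_rfl (mul_nonneg (sub_nonneg.2 hq) ?_)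
    exact sub_nonneg.2 (le_measureReal_Iic_quantile hα₁)
  · refine hXZ.integral_kbLoss_sub_le hα₀.le hα₁ hX hZ measurableSet_Iio subset_rfl
      Iio_subset_Iic_self (mul_nonneg_of_nonpos_of_nonpos (sub_nonpos.2 hq) ?_)
    exact sub_nonpos.2 (measureReal_Iio_quantile_le hα₀)

lemma IndepFun.variance_le_integral_sub_sq (hXZ : IndepFun X Z) (hX : MemLp X 2)
    (hZ : MemLp Z 2) : Var[X] ≤ ∫ ω, (X ω - Z ω) ^ 2 := by
  have hvar : Var[X - Z] = Var[X] + Var[Z] := by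
    rw [variance_sub hX hZ, hXZ.covariance_eq_zero hX hZ]
    ring
  have hsq : ∫ ω, (X ω - Z ω) ^ 2 = Var[X - Z] + (∫ ω, (X ω - Z ω)) ^ 2 := by
    rw [variance_eq_sub (hX.sub hZ)]
    simp
  rw [hsq, hvar]
  linarith [variance_nonneg Z volume, sq_nonneg (∫ ω, (X ω - Z ω))]

end ProbabilityTheory

section Portfolio

variable {Ω : Type*} [MeasurableSpace Ω] {μ : Measure Ω} {n : ℕ} {Y : Fin (n + 1) → Ω → ℝ}

lemma ae_sum_ite_zero_mul_eq {r : ℝ} (hY0 : ∀ᵐ ω ∂μ, Y 0 ω = Real.exp r) (c : ℝ) :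
    ∀ᵐ ω ∂μ, ∑ i, (if i = 0 then Real.exp (-r) * c else 0) * Y i ω = c := by
  filter_upwards [hY0] with ω hω
  simp only [ite_mul, zero_mul, Finset.sum_ite_eq', Finset.mem_univ, ↓reduceIte, hω]
  rw [mul_right_comm, ← Real.exp_add, neg_add_cancel, Real.exp_zero, one_mul]

lemma ProbabilityTheory.IndepFun.sum_mul_of_ae_eq_const {S : Ω → ℝ} {c : ℝ}
    (hS : IndepFun S (fun ω (i : Fin n) => Y i.succ ω) μ) (hY0 : ∀ᵐ ω ∂μ, Y 0 ω = c)
    (β : Fin (n + 1) → ℝ) : IndepFun S (fun ω => ∑ i, β i * Y i ω) μ := by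
  have hφ : Measurable fun v : Fin n → ℝ => β 0 * c + ∑ j, β j.succ * v j := by fun_prop
  refine (hS.comp measurable_id hφ).congr (ae_of_all _ fun _ => rfl) ?_
  filter_upwards [hY0] with ω hω
  simp [Fin.sum_univ_succ, hω]

end Portfolio

theorem mean_quantile_valuation_actuarial_general
    {Ω : Type*} [MeasureSpace Ω] [IsProbabilityMeasure (volume : Measure Ω)]
    (n : ℕ) (Y : Fin (n + 1) → Ω → ℝ) (y : Fin (n + 1) → ℝ)
    (hY : ∀ i, MemLp (Y i) 2 volume)
    (r : ℝ) (hY0 : ∀ᵐ ω, Y 0 ω = Real.exp r) (hy0 : y 0 = 1)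
    (α : ℝ) (hα : α ∈ Set.Ioo (0 : ℝ) 1)
    (coc : ℝ)
    (Sp : Ω → ℝ) (hSp : MemLp Sp 2 volume)
    (hIndep : ProbabilityTheory.IndepFun Sp (fun ω (i : Fin n) => Y i.succ ω) volume)
    (θ η : Fin (n + 1) → ℝ)
    (hθdef : θ = fun i => if i = 0 then Real.exp (-r) * ∫ ω, Sp ω else 0)
    (hηdef : η = fun i => if i = 0 then
        Real.exp (-r) * VaR (fun ω => Sp ω - ∫ ω', Sp ω') α else 0) :
    (∀ β : Fin (n + 1) → ℝ,
      (∫ ω, (Sp ω - ∑ i, θ i * Y i ω) ^ 2) ≤ ∫ ω, (Sp ω - ∑ i, β i * Y i ω) ^ 2) ∧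
    (∀ β : Fin (n + 1) → ℝ,
      (∫ ω, KBLoss α (Sp ω - ∑ i, θ i * Y i ω - ∑ i, η i * Y i ω))
        ≤ ∫ ω, KBLoss α (Sp ω - ∑ i, θ i * Y i ω - ∑ i, β i * Y i ω)) ∧
    (∑ i, θ i * y i) + coc * ∑ i, η i * y i
      = Real.exp (-r) * (∫ ω, Sp ω)
        + Real.exp (-r) * coc * VaR (fun ω => Sp ω - ∫ ω', Sp ω') α := by
  set X : Ω → ℝ := fun ω => Sp ω - ∫ ω', Sp ω'
  have hθY : ∀ᵐ ω, ∑ i, θ i * Y i ω = ∫ ω', Sp ω' := hθdef ▸ ae_sum_ite_zero_mul_eq hY0 _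
  have hηY : ∀ᵐ ω, ∑ i, η i * Y i ω = VaR X α := hηdef ▸ ae_sum_ite_zero_mul_eq hY0 _
  have hpayoff (β : Fin (n + 1) → ℝ) : MemLp (fun ω => ∑ i, β i * Y i ω) 2 volume :=
    memLp_finsetSum _ fun i _ => (hY i).const_mul (β i)
  have hindep (β : Fin (n + 1) → ℝ) : IndepFun X (fun ω => ∑ i, β i * Y i ω) :=
    (hIndep.sum_mul_of_ae_eq_const hY0 β).comp (measurable_id.sub_const _) measurable_id
  refine ⟨fun β => ?_, fun β => ?_, ?_⟩
  · rw [integral_congr_ae (hθY.mono fun ω h => by rw [h]), ← variance_eq_integral hSp.aemeasurable]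
    exact (hIndep.sum_mul_of_ae_eq_const hY0 β).variance_le_integral_sub_sq hSp (hpayoff β)
  · have hX : Integrable X := (hSp.integrable one_le_two).sub (integrable_const _)
    calc ∫ ω, KBLoss α (Sp ω - ∑ i, θ i * Y i ω - ∑ i, η i * Y i ω)
        = ∫ ω, KBLoss α (X ω - VaR X α) :=
          integral_congr_ae (by filter_upwards [hθY, hηY] with ω h₁ h₂; rw [h₁, h₂])
      _ ≤ ∫ ω, KBLoss α (X ω - ∑ i, β i * Y i ω) :=
          (hindep β).integral_kbLoss_sub_VaR_le hα.1 hα.2 hX ((hpayoff β).integrable one_le_two)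
      _ = ∫ ω, KBLoss α (Sp ω - ∑ i, θ i * Y i ω - ∑ i, β i * Y i ω) :=
          integral_congr_ae (by filter_upwards [hθY] with ω h; rw [h])
  · simp only [hθdef, hηdef, ite_mul, zero_mul, Finset.sum_ite_eq', Finset.mem_univ, ↓reduceIte,
      hy0, mul_one]
    ring

/-- The mean-quantile valuation is actuarial: for a square-integrable liability
`S⊥` independent of `(Y₁, …, Yₙ)`, the quadratic hedging strategy is
`θ = (e^{−r}·E[S⊥], 0, …, 0)`, the residual quantile-hedging strategy
`η = (e^{−r}·VaR_α(S⊥ − E[S⊥]), 0, …, 0)` is a minimizer of the residual Koenker–Bassett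
error, and the mean-quantile valuation is the cost-of-capital premium
`ρ(S⊥) = e^{−r}·E[S⊥] + e^{−r}·i·VaR_α(S⊥ − E[S⊥])`. -/
theorem mean_quantile_valuation_actuarial
    {Ω : Type*} [MeasureSpace Ω] [IsProbabilityMeasure (volume : Measure Ω)]
    (n : ℕ) (Y : Fin (n + 1) → Ω → ℝ) (y : Fin (n + 1) → ℝ)
    (hY : ∀ i, MemLp (Y i) 2 volume)
    (hNR : ∀ β : Fin (n + 1) → ℝ, (∀ᵐ ω, ∑ i, β i * Y i ω = 0) → β = 0)
    (r : ℝ) (hr : 0 ≤ r) (hY0 : ∀ᵐ ω, Y 0 ω = Real.exp r) (hy0 : y 0 = 1)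
    (α : ℝ) (hα : α ∈ Set.Ioo (0 : ℝ) 1)
    (coc : ℝ) (hcoc : coc ∈ Set.Ioo (0 : ℝ) 1)
    (Sp : Ω → ℝ) (hSp : MemLp Sp 2 volume)
    (hIndep : ProbabilityTheory.IndepFun Sp (fun ω (i : Fin n) => Y i.succ ω) volume)
    (θ η : Fin (n + 1) → ℝ)
    (hθdef : θ = fun i => if i = 0 then Real.exp (-r) * ∫ ω, Sp ω else 0)
    (hηdef : η = fun i => if i = 0 then
        Real.exp (-r) * VaR (fun ω => Sp ω - ∫ ω', Sp ω') α else 0) :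
    (∀ β : Fin (n + 1) → ℝ,
      (∫ ω, (Sp ω - ∑ i, θ i * Y i ω) ^ 2) ≤ ∫ ω, (Sp ω - ∑ i, β i * Y i ω) ^ 2) ∧
    (∀ β : Fin (n + 1) → ℝ,
      (∫ ω, KBLoss α (Sp ω - ∑ i, θ i * Y i ω - ∑ i, η i * Y i ω))
        ≤ ∫ ω, KBLoss α (Sp ω - ∑ i, θ i * Y i ω - ∑ i, β i * Y i ω)) ∧
    (∑ i, θ i * y i) + coc * ∑ i, η i * y i
      = Real.exp (-r) * (∫ ω, Sp ω)
        + Real.exp (-r) * coc * VaR (fun ω => Sp ω - ∫ ω', Sp ω') α :=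
  mean_quantile_valuation_actuarial_general n Y y hY r hY0 hy0 α hα coc Sp hSp hIndep θ η hθdef
    hηdef
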